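/- arXiv:1403.7052 — 4 statements merged into one kernel-verified Lean document; each statement's English description precedes it below -/
import Mathlib

section
/- Let H and V be Hilbert spaces, a(·,·), c(·,·) symmetric bounded coercive bilinear forms on H and V respectively, and b(·,·) a bounded bilinear form on H × V. Then for every ε > 0 and every (f, g) ∈ H* × V*, the mixed system a(u,v) + b(v,p) = f(v) for all v ∈ H, b(u,q) − ε² c(p,q) = g(q) for all q ∈ V, has a unique solution (u,p) ∈ H × V. -/
/-!
Writing `x = (u, p)` and `y = (v, q)` in the Hilbert product `H × V`, the system says
`B(x, y) = f(v) - g(q)` for all `y`, where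
`B(x, y) = a(u, v) + b(v, p) - b(u, q) + ε² c(p, q)`.
Negating the second equation makes the two `b`-terms cancel on the diagonal, so
`B(x, x) = a(u, u) + ε² c(p, p)` and `B` is coercive; Lax–Milgram then gives a unique solution.
-/

open InnerProductSpace

theorem IsCoercive.existsUnique_apply_eq {E : Type*} [NormedAddCommGroup E] [InnerProductSpace ℝ E]
    [CompleteSpace E] {B : E →L[ℝ] E →L[ℝ] ℝ} (hB : IsCoercive B) (F : E →L[ℝ] ℝ) :
    ∃! x, B x = F := by
  have hcomp : ⇑B = toDual ℝ E ∘ hB.continuousLinearEquivOfBilin := by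
    ext x w
    simp
  have hbij : Function.Bijective B := by
    rw [hcomp]
    exact (toDual ℝ E).bijective.comp hB.continuousLinearEquivOfBilin.bijective
  exact hbij.existsUnique F

theorem LinearMap.isCoercive_mkContinuous₂ {E : Type*} [NormedAddCommGroup E]
    [InnerProductSpace ℝ E] (β : E →ₗ[ℝ] E →ₗ[ℝ] ℝ) (K : ℝ) (hK : ∀ u v, ‖β u v‖ ≤ K * ‖u‖ * ‖v‖)
    {α : ℝ} (hα : 0 < α) (hβ : ∀ u, α * ‖u‖ ^ 2 ≤ β u u) :
    IsCoercive (β.mkContinuous₂ K hK) :=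
  ⟨α, hα, fun u => by simpa only [LinearMap.mkContinuous₂_apply, mul_assoc, ← sq] using hβ u⟩

theorem IsCoercive.smul {E : Type*} [NormedAddCommGroup E] [InnerProductSpace ℝ E]
    {B : E →L[ℝ] E →L[ℝ] ℝ} (hB : IsCoercive B) {r : ℝ} (hr : 0 < r) : IsCoercive (r • B) := by
  obtain ⟨α, hα, hB⟩ := hB
  refine ⟨r * α, mul_pos hr hα, fun u => ?_⟩
  simpa only [smul_apply, smul_eq_mul, mul_assoc] using
    mul_le_mul_of_nonneg_left (hB u) hr.le

section PenalizedSaddle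

variable {E F : Type*} [NormedAddCommGroup E] [InnerProductSpace ℝ E]
  [NormedAddCommGroup F] [InnerProductSpace ℝ F]

noncomputable def penalizedSaddleForm (A : E →L[ℝ] E →L[ℝ] ℝ) (B : E →L[ℝ] F →L[ℝ] ℝ)
    (C : F →L[ℝ] F →L[ℝ] ℝ) : WithLp 2 (E × F) →L[ℝ] WithLp 2 (E × F) →L[ℝ] ℝ :=
  A.bilinearComp (WithLp.fstL 2 ℝ E F) (WithLp.fstL 2 ℝ E F)
    + B.flip.bilinearComp (WithLp.sndL 2 ℝ E F) (WithLp.fstL 2 ℝ E F)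
    - B.bilinearComp (WithLp.fstL 2 ℝ E F) (WithLp.sndL 2 ℝ E F)
    + C.bilinearComp (WithLp.sndL 2 ℝ E F) (WithLp.sndL 2 ℝ E F)

variable (A : E →L[ℝ] E →L[ℝ] ℝ) (B : E →L[ℝ] F →L[ℝ] ℝ) (C : F →L[ℝ] F →L[ℝ] ℝ)

@[simp]
theorem penalizedSaddleForm_apply (x y : WithLp 2 (E × F)) :
    penalizedSaddleForm A B C x y = A x.fst y.fst + B y.fst x.snd - B x.fst y.snd + C x.snd y.snd :=
  rfl

theorem isCoercive_penalizedSaddleForm (hA : IsCoercive A) (hC : IsCoercive C) :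
    IsCoercive (penalizedSaddleForm A B C) := by
  obtain ⟨α, hα, hA⟩ := hA
  obtain ⟨γ, hγ, hC⟩ := hC
  refine ⟨min α γ, lt_min hα hγ, fun x => ?_⟩
  have hnorm : ‖x‖ * ‖x‖ = ‖x.fst‖ * ‖x.fst‖ + ‖x.snd‖ * ‖x.snd‖ := by
    simpa only [sq] using WithLp.prod_norm_sq_eq_of_L2 x
  calc min α γ * ‖x‖ * ‖x‖
      = min α γ * ‖x.fst‖ * ‖x.fst‖ + min α γ * ‖x.snd‖ * ‖x.snd‖ := by
        rw [mul_assoc, hnorm]; ring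
    _ ≤ α * ‖x.fst‖ * ‖x.fst‖ + γ * ‖x.snd‖ * ‖x.snd‖ := by
        gcongr
        · exact min_le_left α γ
        · exact min_le_right α γ
    _ ≤ A x.fst x.fst + C x.snd x.snd := add_le_add (hA _) (hC _)
    _ = penalizedSaddleForm A B C x x := by simp

theorem penalizedSaddleForm_apply_eq_iff (f : E →L[ℝ] ℝ) (g : F →L[ℝ] ℝ) (x : WithLp 2 (E × F)) :
    penalizedSaddleForm A B C x = f.comp (WithLp.fstL 2 ℝ E F) - g.comp (WithLp.sndL 2 ℝ E F) ↔
      (∀ v, A x.fst v + B v x.snd = f v) ∧ (∀ q, B x.fst q - C x.snd q = g q) := by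
  constructor
  · intro h
    refine ⟨fun v => ?_, fun q => ?_⟩
    · simpa using congr($h (WithLp.toLp 2 (v, 0)))
    · have := congr($h (WithLp.toLp 2 (0, q)))
      simp only [penalizedSaddleForm_apply, WithLp.toLp_fst, WithLp.toLp_snd, map_zero,
        zero_apply, add_zero, zero_sub, sub_apply,
        ContinuousLinearMap.comp_apply, WithLp.fstL_apply, WithLp.sndL_apply] at this
      linarith
  · rintro ⟨h₁, h₂⟩
    ext y
    have := h₁ y.fst
    have := h₂ y.snd
    simp only [penalizedSaddleForm_apply, sub_apply,
      ContinuousLinearMap.comp_apply, WithLp.fstL_apply, WithLp.sndL_apply]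
    linarith

end PenalizedSaddle

theorem stmt3_general
    {H V : Type*}
    [NormedAddCommGroup H] [InnerProductSpace ℝ H] [CompleteSpace H]
    [NormedAddCommGroup V] [InnerProductSpace ℝ V] [CompleteSpace V]
    (a : H →ₗ[ℝ] H →ₗ[ℝ] ℝ) (c : V →ₗ[ℝ] V →ₗ[ℝ] ℝ) (b : H →ₗ[ℝ] V →ₗ[ℝ] ℝ)
    (C : ℝ) (hC : 0 < C)
    (ha_bound : ∀ u v : H, |a u v| ≤ C * ‖u‖ * ‖v‖)
    (ha_coer : ∀ u : H, C⁻¹ * ‖u‖ ^ 2 ≤ a u u)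
    (hc_bound : ∀ p q : V, |c p q| ≤ C * ‖p‖ * ‖q‖)
    (hc_coer : ∀ p : V, C⁻¹ * ‖p‖ ^ 2 ≤ c p p)
    (hb_bound : ∀ (v : H) (q : V), |b v q| ≤ C * ‖v‖ * ‖q‖)
    (ε : ℝ) (hε : 0 < ε) (f : H →L[ℝ] ℝ) (g : V →L[ℝ] ℝ) :
    ∃! up : H × V,
      (∀ v : H, a up.1 v + b v up.2 = f v) ∧
      (∀ q : V, b up.1 q - ε ^ 2 * c up.2 q = g q) := by
  -- the bounds are stated with `|·|`, which is `‖·‖` on `ℝ` by definition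
  have hA := a.isCoercive_mkContinuous₂ C ha_bound (inv_pos.2 hC) ha_coer
  have hCε := (c.isCoercive_mkContinuous₂ C hc_bound (inv_pos.2 hC) hc_coer).smul (pow_pos hε 2)
  have key :=
    (isCoercive_penalizedSaddleForm _ (b.mkContinuous₂ C hb_bound) _ hA hCε).existsUnique_apply_eq
      (f.comp (WithLp.fstL 2 ℝ H V) - g.comp (WithLp.sndL 2 ℝ H V))
  simp only [penalizedSaddleForm_apply_eq_iff] at key
  exact (WithLp.equiv 2 (H × V)).existsUnique_congr (fun _ => Iff.rfl) |>.mp key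

/-- Unique solvability of the penalized mixed system
`a(u,v) + b(v,p) = f(v)` for all `v ∈ H`, `b(u,q) − ε² c(p,q) = g(q)` for all `q ∈ V`,
where `a` and `c` are symmetric bounded coercive bilinear forms and `b` is bounded. -/
theorem stmt3
    {H V : Type*}
    [NormedAddCommGroup H] [InnerProductSpace ℝ H] [CompleteSpace H]
    [NormedAddCommGroup V] [InnerProductSpace ℝ V] [CompleteSpace V]
    (a : H →ₗ[ℝ] H →ₗ[ℝ] ℝ) (c : V →ₗ[ℝ] V →ₗ[ℝ] ℝ) (b : H →ₗ[ℝ] V →ₗ[ℝ] ℝ)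
    (C : ℝ) (hC : 0 < C)
    (ha_symm : ∀ u v : H, a u v = a v u)
    (ha_bound : ∀ u v : H, |a u v| ≤ C * ‖u‖ * ‖v‖)
    (ha_coer : ∀ u : H, C⁻¹ * ‖u‖ ^ 2 ≤ a u u)
    (hc_symm : ∀ p q : V, c p q = c q p)
    (hc_bound : ∀ p q : V, |c p q| ≤ C * ‖p‖ * ‖q‖)
    (hc_coer : ∀ p : V, C⁻¹ * ‖p‖ ^ 2 ≤ c p p)
    (hb_bound : ∀ (v : H) (q : V), |b v q| ≤ C * ‖v‖ * ‖q‖)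
    (ε : ℝ) (hε : 0 < ε) (f : H →L[ℝ] ℝ) (g : V →L[ℝ] ℝ) :
    ∃! up : H × V,
      (∀ v : H, a up.1 v + b v up.2 = f v) ∧
      (∀ q : V, b up.1 q - ε ^ 2 * c up.2 q = g q) :=
  stmt3_general a c b C hC ha_bound ha_coer hc_bound hc_coer hb_bound ε hε f g
end

section
/- Let a_{αβ} be a symmetric positive definite 2×2 matrix and a^{αβ} its inverse. The compliance tensor a_{αβγδ} = (1/(2μ))[½(a_{αδ}a_{βγ} + a_{βδ}a_{αγ}) − (λ/(2μ+3λ)) a_{αβ}a_{γδ}] is the inverse of the elastic tensor a^{αβγδ} = μ(a^{αγ}a^{βδ} + a^{βγ}a^{αδ}) + (2μλ/(2μ+λ)) a^{αβ}a^{γδ} on symmetric tensors: for symmetric 2×2 tensors σ and γ, σ^{αβ} = a^{αβγδ} γ_{γδ} if and only if γ_{αβ} = a_{αβγδ} σ^{γδ}. -/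
/-!
Write `A = a` and `B = a⁻¹`. On symmetric tensors the elastic tensor acts as
`γ ↦ 2μ BγB + C tr(Bγ) B` and the compliance tensor as `σ ↦ (2μ)⁻¹ (AσA - k tr(Aσ) A)`, where
`C = 2μλ/(2μ+λ)` and `k = λ/(2μ+3λ)`. Conjugating by `A` turns the elastic map into
`y ↦ 2μ y + C p(y) A` with the linear form `p(y) = tr(By)`, for which `p(A) = tr 1 = 2`. A multiple
of the identity plus such a rank-one term is inverted by `y ↦ (2μ)⁻¹ (y - k p(y) A)` when
`C = k (2μ + 2C)`, and the two Lamé-type constants satisfy this relation.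
-/

open Matrix

section IsotropicInversion

variable {K V : Type*} [Field K] [AddCommGroup V] [Module K V]

theorem isotropic_inversion (p : V →ₗ[K] K) (v : V) (hv : p v = 2) {c C k : K} (hc : c ≠ 0)
    (hCk : C = k * (c + 2 * C)) (x y : V) :
    x = c • y + (C * p y) • v ↔ y = c⁻¹ • (x - (k * p x) • v) := by
  constructor
  · rintro rfl
    simp only [map_add, map_smul, hv, smul_eq_mul]
    match_scalars
    · field_simp
    · field_simp
      linear_combination -p y * hCk
  · rintro rfl
    simp only [map_sub, map_smul, hv, smul_eq_mul]
    match_scalars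
    · field_simp
    · field_simp
      linear_combination -p x * hCk

theorem lame_constants_relation {μ lam : K} (h₁ : 2 * μ + lam ≠ 0) (h₃ : 2 * μ + 3 * lam ≠ 0) :
    2 * μ * lam / (2 * μ + lam) =
      lam / (2 * μ + 3 * lam) * (2 * μ + 2 * (2 * μ * lam / (2 * μ + lam))) := by
  rw [div_mul_eq_mul_div, eq_div_iff h₃]
  field_simp
  ring

end IsotropicInversion

section IsotropicTensor

variable {n : Type*} [Fintype n]

theorem sum_sum_isotropic_mul {K : Type*} [CommSemiring K] {M X : Matrix n n K}
    (hM : M.IsSymm) (hX : X.IsSymm) (c₁ c₂ : K) (α β : n) :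
    ∑ g, ∑ d, (c₁ * (M α g * M β d + M β g * M α d) + c₂ * (M α β * M g d)) * X g d =
      ((2 * c₁) • (M * X * M) + (c₂ * (M * X).trace) • M) α β := by
  have h₁ : ∑ g, ∑ d, M α g * M β d * X g d = (M * X * M) α β := by
    simp only [mul_apply, Finset.sum_mul, hM.apply β]
    rw [Finset.sum_comm]
    simp only [mul_comm, mul_left_comm]
  have h₂ : ∑ g, ∑ d, M β g * M α d * X g d = (M * X * M) α β := by
    rw [← h₁, Finset.sum_comm]
    simp only [hX.apply, mul_comm, mul_left_comm]
  have h₃ : ∑ g, ∑ d, M g d * X g d = (M * X).trace := by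
    simp only [trace, diag_apply, mul_apply, hX.apply]
  have hsplit : ∀ g d,
      (c₁ * (M α g * M β d + M β g * M α d) + c₂ * (M α β * M g d)) * X g d =
        c₁ * (M α g * M β d * X g d) + c₁ * (M β g * M α d * X g d) +
          c₂ * M α β * (M g d * X g d) := by
    intro g d
    ring
  simp only [hsplit, Finset.sum_add_distrib, ← Finset.mul_sum, h₁, h₂, h₃,
    Matrix.add_apply, Matrix.smul_apply, smul_eq_mul]
  ring

theorem sum_sum_isotropic_sub_mul {K : Type*} [Field K] [NeZero (2 : K)] {M X : Matrix n n K}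
    (hM : M.IsSymm) (hX : X.IsSymm) (c k : K) (α β : n) :
    ∑ g, ∑ d, (c * (1 / 2 * (M α d * M β g + M β d * M α g) - k * (M α β * M g d))) * X g d =
      (c • (M * X * M - (k * (M * X).trace) • M)) α β := by
  have hsummand : ∀ g d,
      c * (1 / 2 * (M α d * M β g + M β d * M α g) - k * (M α β * M g d)) =
        c / 2 * (M α g * M β d + M β g * M α d) + -(c * k) * (M α β * M g d) := by
    intro g d
    ring
  have hcoeff : (2 * (c / 2)) • (M * X * M) + (-(c * k) * (M * X).trace) • M =
      c • (M * X * M - (k * (M * X).trace) • M) := by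
    rw [mul_div_cancel₀ c two_ne_zero]
    module
  simp only [hsummand, sum_sum_isotropic_mul hM hX, hcoeff]

theorem eq_smul_conj_add_smul_iff [DecidableEq n] {K : Type*} [CommSemiring K]
    {A B : Matrix n n K} (hAB : A * B = 1) (hBA : B * A = 1) (σ γ : Matrix n n K) (c d : K) :
    σ = c • (B * γ * B) + d • B ↔ A * σ * A = c • γ + d • A := by
  have hcancel : ∀ {P Q : Matrix n n K}, P * Q = 1 → Q * P = 1 → ∀ X, P * (Q * X * Q) * P = X :=
    fun hPQ hQP X => by
      simp only [← Matrix.mul_assoc, hPQ, Matrix.one_mul]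
      simp only [Matrix.mul_assoc, hQP, Matrix.mul_one]
  have hrhs : B * (c • γ + d • A) * B = c • (B * γ * B) + d • B := by
    simp only [Matrix.mul_add, Matrix.add_mul, Matrix.mul_smul, Matrix.smul_mul, hBA,
      Matrix.one_mul]
  rw [← hrhs]
  constructor
  · rintro rfl
    exact hcancel hAB hBA _
  · intro h
    rw [← h, hcancel hBA hAB]

end IsotropicTensor

/-- The compliance tensor
`a_{αβγδ} = (1/(2μ))[½(a_{αδ}a_{βγ} + a_{βδ}a_{αγ}) − (λ/(2μ+3λ)) a_{αβ}a_{γδ}]`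
is the inverse of the elastic tensor
`a^{αβγδ} = μ(a^{αγ}a^{βδ} + a^{βγ}a^{αδ}) + (2μλ/(2μ+λ)) a^{αβ}a^{γδ}`
on symmetric tensors: `σ = a^{··} γ` iff `γ = a_{··} σ`.  Here `a^{αβ}` is
the inverse matrix of the symmetric positive definite matrix `a_{αβ}`. -/
theorem stmt8
    (a ainv : Matrix (Fin 2) (Fin 2) ℝ) (ha : a.PosDef)
    (hinv : a * ainv = 1)
    (μ lam : ℝ) (hμ : 0 < μ) (hlam : 0 ≤ lam)
    (σ γm : Matrix (Fin 2) (Fin 2) ℝ) (hσ : σ.IsSymm) (hγ : γm.IsSymm) :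
    (∀ α β : Fin 2,
        σ α β = ∑ g : Fin 2, ∑ d : Fin 2,
          (μ * (ainv α g * ainv β d + ainv β g * ainv α d) +
            2 * μ * lam / (2 * μ + lam) * (ainv α β * ainv g d)) * γm g d)
      ↔
    (∀ α β : Fin 2,
        γm α β = ∑ g : Fin 2, ∑ d : Fin 2,
          (1 / (2 * μ) *
            (1 / 2 * (a α d * a β g + a β d * a α g) -
              lam / (2 * μ + 3 * lam) * (a α β * a g d))) * σ g d) := by
  have haSymm : a.IsSymm := isHermitian_iff_isSymm.mp ha.isHermitian
  have hinvSymm : ainv.IsSymm := by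
    rw [← inv_eq_right_inv hinv, IsSymm, transpose_nonsing_inv, haSymm.eq]
  have hinv' : ainv * a = 1 := mul_eq_one_comm.mp hinv
  let p : Matrix (Fin 2) (Fin 2) ℝ →ₗ[ℝ] ℝ := traceLinearMap _ ℝ ℝ ∘ₗ LinearMap.mulLeft ℝ ainv
  have hpa : p a = 2 := by simp [p, hinv']
  have hpσ : p (a * σ * a) = (a * σ).trace := by
    simp [p, ← Matrix.mul_assoc, hinv', trace_mul_comm σ a]
  simp only [sum_sum_isotropic_mul hinvSymm hγ, sum_sum_isotropic_sub_mul haSymm hσ,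
    Matrix.ext_iff]
  rw [eq_smul_conj_add_smul_iff hinv hinv', one_div, ← hpσ]
  exact isotropic_inversion p a hpa (by positivity)
    (lame_constants_relation (by positivity) (by positivity)) _ _
end

section
/- Peetre's lemma: Let X, Y, Z be Banach spaces and suppose the embedding X → Z is compact. Let A : X → Y be a bounded linear operator and suppose there is C > 0 with ‖x‖_X ≤ C(‖Ax‖_Y + ‖x‖_Z) for all x ∈ X. If A is injective, then there exists C' > 0 with ‖x‖_X ≤ C'‖Ax‖_Y for all x ∈ X. -/
/-- Peetre's lemma: if the embedding `ι : X → Z` is compact, `A : X → Y` is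
bounded linear and injective, and `‖x‖_X ≤ C(‖Ax‖_Y + ‖ιx‖_Z)`, then
`‖x‖_X ≤ C'‖Ax‖_Y` for some constant `C' > 0`. -/
theorem stmt12
    {X Y Z : Type*}
    [NormedAddCommGroup X] [NormedSpace ℝ X] [CompleteSpace X]
    [NormedAddCommGroup Y] [NormedSpace ℝ Y] [CompleteSpace Y]
    [NormedAddCommGroup Z] [NormedSpace ℝ Z] [CompleteSpace Z]
    (ι : X →L[ℝ] Z) (hι : IsCompactOperator ι)
    (A : X →L[ℝ] Y) (hA : Function.Injective A)
    (C : ℝ) (hC : 0 < C)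
    (hbound : ∀ x : X, ‖x‖ ≤ C * (‖A x‖ + ‖ι x‖)) :
    ∃ C' : ℝ, 0 < C' ∧ ∀ x : X, ‖x‖ ≤ C' * ‖A x‖ := by
  by_contra h
  push_neg at h
  -- get a sequence of unit vectors with ‖A uₙ‖ < 1/(n+1)
  have hseq : ∀ n : ℕ, ∃ u : X, ‖u‖ = 1 ∧ ‖A u‖ < 1 / (n + 1) := by
    intro n
    obtain ⟨x, hx⟩ := h (n + 1) (by positivity)
    have hx0 : x ≠ 0 := by
      rintro rfl
      simp at hx
    have hxn : (0 : ℝ) < ‖x‖ := norm_pos_iff.2 hx0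
    refine ⟨‖x‖⁻¹ • x, ?_, ?_⟩
    · rw [norm_smul, norm_inv, norm_norm, inv_mul_cancel₀ hxn.ne']
    · rw [map_smul, norm_smul, norm_inv, norm_norm]
      rw [inv_mul_lt_iff₀ hxn, mul_one_div, lt_div_iff₀ (by positivity), mul_comm]
      exact hx
  choose u hu1 hu2 using hseq
  -- A uₙ → 0
  have hAu : Filter.Tendsto (fun n => ‖A (u n)‖) Filter.atTop (nhds 0) := by
    have h0 : Filter.Tendsto (fun n : ℕ => 1 / ((n : ℝ) + 1)) Filter.atTop (nhds 0) :=
      tendsto_one_div_add_atTop_nhds_zero_nat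
    exact squeeze_zero (fun n => norm_nonneg _) (fun n => (hu2 n).le) h0
  -- compactness : subsequence with ι (u (φ n)) convergent
  have hcpt : IsCompact (closure (ι '' Metric.closedBall 0 1)) :=
    hι.isCompact_closure_image_closedBall (𝕜₁ := ℝ) 1
  have hmem : ∀ n, ι (u n) ∈ closure (ι '' Metric.closedBall 0 1) := by
    intro n
    exact subset_closure ⟨u n, by simp [hu1 n], rfl⟩
  obtain ⟨z, _, φ, hφmono, hφ⟩ := hcpt.tendsto_subseq hmem
  -- u ∘ φ is Cauchy
  have hAuφ : Filter.Tendsto (fun n => ‖A (u (φ n))‖) Filter.atTop (nhds 0) :=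
    hAu.comp hφmono.tendsto_atTop
  set b : ℕ → ℝ := fun n => C * (‖A (u (φ n))‖ + dist (ι (u (φ n))) z) with hb
  have hbten : Filter.Tendsto b Filter.atTop (nhds 0) := by
    have : Filter.Tendsto (fun n => ‖A (u (φ n))‖ + dist (ι (u (φ n))) z)
        Filter.atTop (nhds (0 + 0)) :=
      hAuφ.add (tendsto_iff_dist_tendsto_zero.mp hφ)
    simpa using this.const_mul C
  have hcauchy : CauchySeq (fun n => u (φ n)) := by
    rw [Metric.cauchySeq_iff]
    intro ε hε
    obtain ⟨N, hN⟩ := (Metric.tendsto_atTop.mp hbten) (ε / 2) (by linarith)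
    refine ⟨N, fun m hm n hn => ?_⟩
    have key : dist (u (φ m)) (u (φ n)) ≤ b m + b n := by
      rw [dist_eq_norm]
      calc ‖u (φ m) - u (φ n)‖
          ≤ C * (‖A (u (φ m) - u (φ n))‖ + ‖ι (u (φ m) - u (φ n))‖) := hbound _
        _ ≤ C * ((‖A (u (φ m))‖ + ‖A (u (φ n))‖) +
              (dist (ι (u (φ m))) z + dist (ι (u (φ n))) z)) := by
            apply mul_le_mul_of_nonneg_left _ hC.le
            gcongr
            · rw [map_sub]; exact norm_sub_le _ _
            · rw [map_sub, ← dist_eq_norm]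
              exact dist_triangle_right _ _ _
        _ = b m + b n := by rw [hb]; ring
    have hm' := hN m hm
    have hn' := hN n hn
    rw [Real.dist_eq] at hm' hn'
    have hbm : b m < ε / 2 := lt_of_abs_lt (by simpa using hm')
    have hbn : b n < ε / 2 := lt_of_abs_lt (by simpa using hn')
    linarith
  obtain ⟨x, hx⟩ := cauchySeq_tendsto_of_complete hcauchy
  -- ‖x‖ = 1
  have hxnorm : ‖x‖ = 1 := by
    have := (continuous_norm.tendsto x).comp hx
    have h1 : Filter.Tendsto (fun n => ‖u (φ n)‖) Filter.atTop (nhds 1) := by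
      simp only [hu1]
      exact (tendsto_const_nhds : Filter.Tendsto (fun _ : ℕ => (1:ℝ)) _ _)
    exact tendsto_nhds_unique this h1
  -- A x = 0
  have hAx : A x = 0 := by
    have h1 : Filter.Tendsto (fun n => A (u (φ n))) Filter.atTop (nhds (A x)) :=
      (A.continuous.tendsto x).comp hx
    have h2 : Filter.Tendsto (fun n => A (u (φ n))) Filter.atTop (nhds 0) :=
      tendsto_zero_iff_norm_tendsto_zero.mpr hAuφ
    exact tendsto_nhds_unique h1 h2
  have : x = 0 := hA (by simpa using hAx)
  rw [this] at hxnorm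
  simp at hxnorm
end

section
/- Let τ be a triangle with edge e₁ lying on a line, λ₁ the barycentric coordinate vanishing on e₁, and √a a smooth positive weight. Then there exist unique quadratic polynomials p₁², p₂² on τ such that the cubics p₁³ = λ₁ p₁² + 1 and p₂³ = λ₁ p₂² + λ₂ are orthogonal to all quadratics in the √a-weighted L²(τ) inner product; moreover p₁³ and p₂³ restricted to e₁ are linear (equal to 1 and λ₂ respectively) and span a 2-dimensional space whose elements are determined on e₁ by their weighted zero and first moments. -/
/-!
The weighted form `B(p, q) = ∫_τ λ₁ p q √a` on quadratics is positive definite: `λ₁ √a > 0` on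
the interior of `τ`, and a polynomial vanishing on an open set is zero. On a finite-dimensional
space it therefore identifies quadratics with their dual, so `B(p, ·) = -∫_τ f · √a` has exactly
one quadratic solution `p`; `f = 1` and `f = λ₂` give `p₁²` and `p₂²`.
On `e₁` the factor `λ₁` vanishes, so the cubics restrict to `1` and `λ₂`. A combination
`g = c₁ + c₂ λ₂` with vanishing zero and first moments has `∫_{e₁} g² √a = 0`, so `g` vanishes at
both endpoints of `e₁`, where `λ₂` equals `1` and `0`.
-/

open MeasureTheory
open scoped MeasureTheory

/-- `p` is (the function of) a polynomial of total degree at most `k` on `ℝ²`. -/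
def IsPolyDegE (k : ℕ) (p : EuclideanSpace ℝ (Fin 2) → ℝ) : Prop :=
  ∃ q : MvPolynomial (Fin 2) ℝ, q.totalDegree ≤ k ∧
    ∀ x : EuclideanSpace ℝ (Fin 2), p x = MvPolynomial.eval x q

open Set

namespace IsPolyDegE

variable {k : ℕ} {p : EuclideanSpace ℝ (Fin 2) → ℝ}

theorem analyticOnNhd (hp : IsPolyDegE k p) : AnalyticOnNhd ℝ p univ := by
  obtain ⟨q, -, hpq⟩ := hp
  rw [show p = _ from funext hpq]
  exact (AnalyticOnNhd.eval_mvPolynomial q).comp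
    ((EuclideanSpace.equiv (Fin 2) ℝ).toContinuousLinearMap.analyticOnNhd univ) (mapsTo_univ _ _)

theorem continuous (hp : IsPolyDegE k p) : Continuous p :=
  continuousOn_univ.1 hp.analyticOnNhd.continuousOn

theorem eq_zero_of_eqOn_zero (hp : IsPolyDegE k p) {U : Set (EuclideanSpace ℝ (Fin 2))}
    (hU : IsOpen U) (hne : U.Nonempty) (h : EqOn p 0 U) : p = 0 := by
  obtain ⟨z, hz⟩ := hne
  funext x
  exact hp.analyticOnNhd.eqOn_zero_of_preconnected_of_eventuallyEq_zero isPreconnected_univ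
    (mem_univ z) (Filter.mem_of_superset (hU.mem_nhds hz) h) (mem_univ x)

end IsPolyDegE

noncomputable def polySubmodule (k : ℕ) : Submodule ℝ (EuclideanSpace ℝ (Fin 2) → ℝ) :=
  (MvPolynomial.restrictTotalDegree (Fin 2) ℝ k).map
    (LinearMap.pi fun x : EuclideanSpace ℝ (Fin 2) => (MvPolynomial.aeval (R := ℝ) ⇑x).toLinearMap)

theorem mem_polySubmodule {k : ℕ} {p : EuclideanSpace ℝ (Fin 2) → ℝ} :
    p ∈ polySubmodule k ↔ IsPolyDegE k p := by
  simp only [polySubmodule, Submodule.mem_map, MvPolynomial.mem_restrictTotalDegree, IsPolyDegE,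
    funext_iff, LinearMap.pi_apply, AlgHom.toLinearMap_apply]
  exact exists_congr fun q => and_congr_right fun _ => forall_congr' fun x => eq_comm

instance (k : ℕ) : FiniteDimensional ℝ (polySubmodule k) := Module.Finite.map _ _

theorem LinearMap.BilinForm.existsUnique_apply_eq_of_anisotropic {K V : Type*} [Field K]
    [AddCommGroup V] [Module K V] [FiniteDimensional K V] {B : LinearMap.BilinForm K V}
    (hB : ∀ v, B v v = 0 → v = 0) (φ : Module.Dual K V) : ∃! v, ∀ w, B v w = φ w := by
  have hnd : B.Nondegenerate := ⟨fun v hv => hB v (hv v), fun v hv => hB v (hv v)⟩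
  simpa only [LinearMap.ext_iff, LinearMap.BilinForm.toDual_def] using
    (B.toDual hnd).bijective.existsUnique φ

theorem MeasureTheory.eqOn_zero_interior_of_setIntegral_eq_zero {X : Type*} [TopologicalSpace X]
    [MeasurableSpace X] {μ : Measure X} [μ.IsOpenPosMeasure] {K : Set X} {h : X → ℝ}
    (hK : MeasurableSet K) (hc : ContinuousOn h (interior K)) (hi : IntegrableOn h K μ)
    (hnn : ∀ x ∈ K, 0 ≤ h x) (h0 : ∫ x in K, h x ∂μ = 0) : EqOn h 0 (interior K) := by
  have hae : h =ᵐ[μ.restrict K] 0 :=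
    (setIntegral_eq_zero_iff_of_nonneg_ae ((ae_restrict_iff' hK).2 (.of_forall hnn)) hi).1 h0
  exact Measure.eqOn_open_of_ae_eq (ae_restrict_of_ae_restrict_of_subset interior_subset hae)
    isOpen_interior hc continuousOn_const

section WeightedForm

variable {X : Type*} [TopologicalSpace X] [T2Space X] [MeasurableSpace X] [OpensMeasurableSpace X]
  (μ : Measure X) [IsFiniteMeasureOnCompacts μ] {K : Set X} (hK : IsCompact K)
  {V : Submodule ℝ (X → ℝ)} (hV : ∀ p ∈ V, Continuous p)

include hK hV in
theorem integrableOn_mul_of_mem {g : X → ℝ} (hg : Continuous g) (p : V) :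
    IntegrableOn (fun x => g x * (p : X → ℝ) x) K μ :=
  (hg.mul (hV p p.2)).continuousOn.integrableOn_compact hK

noncomputable def setIntegralMulₗ {g : X → ℝ} (hg : Continuous g) : Module.Dual ℝ V where
  toFun q := ∫ x in K, g x * (q : X → ℝ) x ∂μ
  map_add' p q := by
    simp only [Submodule.coe_add, Pi.add_apply, mul_add]
    exact integral_add (integrableOn_mul_of_mem μ hK hV hg p) (integrableOn_mul_of_mem μ hK hV hg q)
  map_smul' c q := by
    simp only [Submodule.coe_smul, Pi.smul_apply, smul_eq_mul, mul_left_comm (g _),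
      RingHom.id_apply]
    exact integral_const_mul c _

theorem setIntegralMulₗ_apply {g : X → ℝ} (hg : Continuous g) (q : V) :
    setIntegralMulₗ μ hK hV hg q = ∫ x in K, g x * (q : X → ℝ) x ∂μ :=
  rfl

noncomputable def setIntegralForm {ρ : X → ℝ} (hρ : Continuous ρ) : LinearMap.BilinForm ℝ V where
  toFun p := setIntegralMulₗ μ hK hV (hρ.mul (hV p p.2))
  map_add' p q := by
    ext r
    simp only [setIntegralMulₗ, LinearMap.coe_mk, AddHom.coe_mk, LinearMap.add_apply,
      Submodule.coe_add, Pi.add_apply, mul_add, add_mul]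
    exact integral_add (integrableOn_mul_of_mem μ hK hV (hρ.mul (hV p p.2)) r)
      (integrableOn_mul_of_mem μ hK hV (hρ.mul (hV q q.2)) r)
  map_smul' c p := by
    ext r
    simp only [setIntegralMulₗ, LinearMap.coe_mk, AddHom.coe_mk, LinearMap.smul_apply,
      Submodule.coe_smul, Pi.mul_apply, Pi.smul_apply, smul_eq_mul, RingHom.id_apply,
      ← integral_const_mul]
    congr 1 with x
    ring

theorem setIntegralForm_apply {ρ : X → ℝ} (hρ : Continuous ρ) (p q : V) :
    setIntegralForm μ hK hV hρ p q = ∫ x in K, ρ x * (p : X → ℝ) x * (q : X → ℝ) x ∂μ :=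
  rfl

include hK hV in
theorem setIntegralForm_self_eq_zero [μ.IsOpenPosMeasure]
    (hVK : ∀ p ∈ V, EqOn p 0 (interior K) → p = 0) {ρ : X → ℝ} (hρ : Continuous ρ)
    (hρK : ∀ x ∈ K, 0 ≤ ρ x) (hρpos : ∀ x ∈ interior K, 0 < ρ x) (p : V)
    (hp : setIntegralForm μ hK hV hρ p p = 0) : p = 0 := by
  have hzero : EqOn (fun x => ρ x * (p : X → ℝ) x * (p : X → ℝ) x) 0 (interior K) :=
    eqOn_zero_interior_of_setIntegral_eq_zero hK.measurableSet
      ((hρ.mul (hV p p.2)).mul (hV p p.2)).continuousOn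
      (integrableOn_mul_of_mem μ hK hV (hρ.mul (hV p p.2)) p)
      (fun x hx => by rw [mul_assoc]; exact mul_nonneg (hρK x hx) (mul_self_nonneg _)) hp
  exact Subtype.ext (hVK p p.2 fun x hx => by simpa [mul_assoc, (hρpos x hx).ne'] using hzero hx)

include hK hV in
theorem existsUnique_setIntegral_orthogonal [μ.IsOpenPosMeasure] [FiniteDimensional ℝ V]
    (hVK : ∀ p ∈ V, EqOn p 0 (interior K) → p = 0) {ℓ w f : X → ℝ} (hℓ : Continuous ℓ)
    (hℓK : ∀ x ∈ K, 0 ≤ ℓ x) (hℓpos : ∀ x ∈ interior K, 0 < ℓ x) (hw : Continuous w)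
    (hwK : ∀ x ∈ K, 0 < w x) (hf : Continuous f) :
    ∃! p, p ∈ V ∧ ∀ q ∈ V, ∫ x in K, (ℓ x * p x + f x) * q x * w x ∂μ = 0 := by
  set B := setIntegralForm μ hK hV (hℓ.mul hw)
  set φ := -setIntegralMulₗ μ hK hV (hf.mul hw)
  have key : ∀ p q : V,
      ∫ x in K, (ℓ x * (p : X → ℝ) x + f x) * (q : X → ℝ) x * w x ∂μ = B p q - φ q := by
    intro p q
    rw [LinearMap.neg_apply, sub_neg_eq_add, setIntegralForm_apply, setIntegralMulₗ_apply,
      ← integral_add]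
    · congr 1 with x
      simp only [Pi.mul_apply]
      ring
    · exact (((hℓ.mul hw).mul (hV p p.2)).mul (hV q q.2)).continuousOn.integrableOn_compact hK
    · exact integrableOn_mul_of_mem μ hK hV (hf.mul hw) q
  have hB : ∀ p, B p p = 0 → p = 0 :=
    setIntegralForm_self_eq_zero μ hK hV hVK (hℓ.mul hw)
      (fun x hx => mul_nonneg (hℓK x hx) (hwK x hx).le)
      (fun x hx => mul_pos (hℓpos x hx) (hwK x (interior_subset hx)))
  obtain ⟨p, hp, huniq⟩ := B.existsUnique_apply_eq_of_anisotropic hB φ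
  refine ⟨p, ⟨p.2, fun q hq => by rw [key p ⟨q, hq⟩, hp, sub_self]⟩, ?_⟩
  rintro p' ⟨hp'V, hp'⟩
  exact congrArg Subtype.val
    (huniq ⟨p', hp'V⟩ fun q => sub_eq_zero.1 ((key _ q).symm.trans (hp' q q.2)))

end WeightedForm

theorem AffineMap.pos_of_mem_interior {E : Type*} [NormedAddCommGroup E] [NormedSpace ℝ E]
    (L : E →ᵃ[ℝ] ℝ) (hL : L.linear ≠ 0) {s : Set E} (hs : ∀ y ∈ s, 0 ≤ L y) {x : E}
    (hx : x ∈ interior s) : 0 < L x := by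
  refine (hs x (interior_subset hx)).lt_of_ne' fun hLx => hL (LinearMap.ext fun u => ?_)
  have hmin : IsLocalMin L x :=
    Filter.mem_of_superset (mem_interior_iff_mem_nhds.1 hx) fun y hy => hLx ▸ hs y hy
  have hline : (fun t : ℝ => L (x + t • u)) = fun t => t * L.linear u + L x := by
    funext t
    rw [add_comm x, ← vadd_eq_add, L.map_vadd, map_smul, smul_eq_mul, vadd_eq_add]
  have hmin' : IsLocalMin (fun t : ℝ => t * L.linear u + L x) 0 := by
    rw [← hline]
    exact IsLocalMin.comp_continuous (g := fun t : ℝ => x + t • u) (by simpa using hmin)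
      (by fun_prop)
  simpa using hmin'.hasDerivAt_eq_zero ((hasDerivAt_mul_const _).add_const _)

theorem AffineIndependent.interior_convexHull_nonempty {E : Type*} [NormedAddCommGroup E]
    [NormedSpace ℝ E] [FiniteDimensional ℝ E] {n : ℕ} {p : Fin (n + 1) → E}
    (hp : AffineIndependent ℝ p) (hn : Module.finrank ℝ E = n) :
    (interior (convexHull ℝ (range p))).Nonempty :=
  interior_convexHull_nonempty_iff_affineSpan_eq_top.2
    (hp.affineSpan_eq_top_iff_card_eq_finrank_add_one.2 (by simp [hn]))

theorem isCompact_segment {E : Type*} [NormedAddCommGroup E] [NormedSpace ℝ E] (x y : E) :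
    IsCompact (segment ℝ x y) := by
  rw [← convexHull_pair (𝕜 := ℝ)]
  exact (toFinite _).isCompact_convexHull ℝ

section Segment

variable {E : Type*} [NormedAddCommGroup E] [NormedSpace ℝ E] [MeasurableSpace E] [BorelSpace E]
  {x y : E}

theorem integrableOn_segment_hausdorff {g : E → ℝ} (hg : Continuous g) :
    IntegrableOn g (segment ℝ x y) μH[1] :=
  hg.continuousOn.integrableOn_of_subset_isCompact (isCompact_segment x y)
    (isCompact_segment x y).isClosed.measurableSet subset_rfl (by simp [edist_ne_top])

theorem eqOn_zero_segment_of_setIntegral_eq_zero (hxy : x ≠ y) {g : E → ℝ} (hg : Continuous g)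
    (hnn : ∀ z ∈ segment ℝ x y, 0 ≤ g z) (h0 : ∫ z in segment ℝ x y, g z ∂μH[1] = 0) :
    EqOn g 0 (segment ℝ x y) := by
  have hseg : segment ℝ x y = AffineMap.lineMap x y '' Icc (0 : ℝ) 1 :=
    segment_eq_image_lineMap ℝ x y
  have hmeas : MeasurableSet (segment ℝ x y) := (isCompact_segment x y).isClosed.measurableSet
  have hae : ∀ᵐ z ∂μH[1].restrict (segment ℝ x y), g z = 0 :=
    (setIntegral_eq_zero_iff_of_nonneg_ae ((ae_restrict_iff' hmeas).2 (.of_forall hnn))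
      (integrableOn_segment_hausdorff hg)).1 h0
  -- `lineMap x y` scales `μH[1]` by `‖x - y‖ ≠ 0`, so null sets pull back to null sets.
  have hae' : ∀ᵐ t ∂volume.restrict (Icc (0 : ℝ) 1), g (AffineMap.lineMap x y t) = 0 := by
    rw [ae_iff, Measure.restrict_apply' hmeas] at hae
    rw [ae_iff, Measure.restrict_apply' measurableSet_Icc, ← hausdorffMeasure_real]
    have himage := hausdorffMeasure_lineMap_image x y
      (AffineMap.lineMap x y ⁻¹' {z | ¬g z = 0} ∩ Icc 0 1)
    rw [image_preimage_inter, ← hseg, hae, eq_comm, smul_eq_zero] at himage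
    exact himage.resolve_left (by simpa using hxy)
  have hIcc := Measure.eqOn_Icc_of_ae_eq volume zero_ne_one hae'
    (hg.comp AffineMap.lineMap_continuous).continuousOn continuousOn_const
  rw [hseg]
  rintro _ ⟨t, ht, rfl⟩
  exact hIcc ht

theorem eq_zero_of_setIntegral_segment_moments {ℓ w : E → ℝ} (hxy : ℓ x ≠ ℓ y)
    (hℓ : Continuous ℓ) (hw : Continuous w) (hwpos : ∀ z ∈ segment ℝ x y, 0 < w z) {c₁ c₂ : ℝ}
    (h₀ : ∫ z in segment ℝ x y, (c₁ + c₂ * ℓ z) * w z ∂μH[1] = 0)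
    (h₁ : ∫ z in segment ℝ x y, (c₁ + c₂ * ℓ z) * ℓ z * w z ∂μH[1] = 0) :
    c₁ = 0 ∧ c₂ = 0 := by
  set g : E → ℝ := fun z => c₁ + c₂ * ℓ z
  have hg : Continuous g := by fun_prop
  have hsq : ∫ z in segment ℝ x y, g z * g z * w z ∂μH[1] = 0 := by
    calc ∫ z in segment ℝ x y, g z * g z * w z ∂μH[1]
        = ∫ z in segment ℝ x y, (c₁ * ((c₁ + c₂ * ℓ z) * w z)
            + c₂ * ((c₁ + c₂ * ℓ z) * ℓ z * w z)) ∂μH[1] := by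
          congr 1 with z
          ring
      _ = 0 := by
          rw [integral_add, integral_const_mul, integral_const_mul, h₀, h₁, mul_zero, mul_zero,
            add_zero]
          all_goals exact (integrableOn_segment_hausdorff (by fun_prop)).const_mul _
  have hzero := eqOn_zero_segment_of_setIntegral_eq_zero (fun h => hxy (congrArg ℓ h))
    ((hg.mul hg).mul hw) (fun z hz => mul_nonneg (mul_self_nonneg _) (hwpos z hz).le) hsq
  have hg_seg : ∀ z ∈ segment ℝ x y, g z = 0 := fun z hz => by
    simpa [(hwpos z hz).ne'] using hzero hz
  have hx := hg_seg x (left_mem_segment ℝ x y)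
  have hy := hg_seg y (right_mem_segment ℝ x y)
  have hc₂ : c₂ = 0 :=
    (mul_eq_zero.1 (show c₂ * (ℓ x - ℓ y) = 0 by linear_combination hx - hy)).resolve_right
      (sub_ne_zero.2 hxy)
  exact ⟨by simpa [g, hc₂] using hx, hc₂⟩

end Segment

theorem existsUnique_quadratic_orthogonal {v₁ v₂ v₃ : EuclideanSpace ℝ (Fin 2)}
    (hind : AffineIndependent ℝ ![v₁, v₂, v₃]) (L : EuclideanSpace ℝ (Fin 2) →ᵃ[ℝ] ℝ)
    (hL : L v₁ = 1 ∧ L v₂ = 0 ∧ L v₃ = 0) {k : ℕ} {w f : EuclideanSpace ℝ (Fin 2) → ℝ}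
    (hw : Continuous w) (hwpos : ∀ x, 0 < w x) (hf : Continuous f) :
    ∃! p, IsPolyDegE k p ∧ ∀ q, IsPolyDegE k q →
      ∫ x in convexHull ℝ {v₁, v₂, v₃}, (L x * p x + f x) * q x * w x = 0 := by
  set τ := convexHull ℝ {v₁, v₂, v₃}
  have hτ : IsCompact τ := (toFinite _).isCompact_convexHull ℝ
  have hτ_int : (interior τ).Nonempty := by
    have := hind.interior_convexHull_nonempty (by simp)
    rw [Matrix.range_cons, Matrix.range_cons, Matrix.range_cons_empty] at this
    exact this
  have hLτ : ∀ x ∈ τ, 0 ≤ L x := fun x hx =>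
    convexHull_min (by rintro _ (rfl | rfl | rfl) <;> simp [hL])
      ((convex_Ici 0).affine_preimage L) hx
  have hLlin : L.linear ≠ 0 := fun h => by
    simpa [h, hL] using L.linearMap_vsub v₂ v₁
  simpa only [mem_polySubmodule] using
    existsUnique_setIntegral_orthogonal volume hτ
      (fun p hp => (mem_polySubmodule.1 hp).continuous)
      (fun p hp h => (mem_polySubmodule.1 hp).eq_zero_of_eqOn_zero isOpen_interior hτ_int h)
      L.continuous_of_finiteDimensional hLτ (fun x hx => L.pos_of_mem_interior hLlin hLτ hx) hw
      (fun x _ => hwpos x) hf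

/-- Existence and uniqueness of the quadratics `p₁², p₂²` making the cubics
`p₁³ = λ₁p₁² + 1` and `p₂³ = λ₁p₂² + λ₂` orthogonal to all quadratics in the
`√a`-weighted `L²(τ)` inner product; on the edge `e₁` these cubics equal `1`
and `λ₂` (hence are linear there), and elements of their span are determined
on `e₁` by their weighted zero and first moments. -/
theorem stmt17
    (v₁ v₂ v₃ : EuclideanSpace ℝ (Fin 2))
    (hind : AffineIndependent ℝ ![v₁, v₂, v₃])
    (L1 L2 : EuclideanSpace ℝ (Fin 2) →ᵃ[ℝ] ℝ)
    (hL1 : L1 v₁ = 1 ∧ L1 v₂ = 0 ∧ L1 v₃ = 0)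
    (hL2 : L2 v₂ = 1 ∧ L2 v₁ = 0 ∧ L2 v₃ = 0)
    (a : EuclideanSpace ℝ (Fin 2) → ℝ) (ha : Continuous a)
    (hapos : ∀ x, 0 < a x) :
    (∃! pq : (EuclideanSpace ℝ (Fin 2) → ℝ) × (EuclideanSpace ℝ (Fin 2) → ℝ),
      IsPolyDegE 2 pq.1 ∧ IsPolyDegE 2 pq.2 ∧
      (∀ q, IsPolyDegE 2 q →
        ∫ x in convexHull ℝ {v₁, v₂, v₃},
          (L1 x * pq.1 x + 1) * q x * Real.sqrt (a x) = 0) ∧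
      (∀ q, IsPolyDegE 2 q →
        ∫ x in convexHull ℝ {v₁, v₂, v₃},
          (L1 x * pq.2 x + L2 x) * q x * Real.sqrt (a x) = 0)) ∧
    (∀ pq : (EuclideanSpace ℝ (Fin 2) → ℝ) × (EuclideanSpace ℝ (Fin 2) → ℝ),
      (IsPolyDegE 2 pq.1 ∧ IsPolyDegE 2 pq.2 ∧
       (∀ q, IsPolyDegE 2 q →
         ∫ x in convexHull ℝ {v₁, v₂, v₃},
           (L1 x * pq.1 x + 1) * q x * Real.sqrt (a x) = 0) ∧
       (∀ q, IsPolyDegE 2 q →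
         ∫ x in convexHull ℝ {v₁, v₂, v₃},
           (L1 x * pq.2 x + L2 x) * q x * Real.sqrt (a x) = 0)) →
      (∀ x ∈ segment ℝ v₂ v₃,
        L1 x * pq.1 x + 1 = 1 ∧ L1 x * pq.2 x + L2 x = L2 x) ∧
      (∀ c₁ c₂ : ℝ,
        (∫ x in segment ℝ v₂ v₃,
            (c₁ * (L1 x * pq.1 x + 1) + c₂ * (L1 x * pq.2 x + L2 x)) *
              Real.sqrt (a x) ∂μH[1]) = 0 →
        (∫ x in segment ℝ v₂ v₃,
            (c₁ * (L1 x * pq.1 x + 1) + c₂ * (L1 x * pq.2 x + L2 x)) * L2 x *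
              Real.sqrt (a x) ∂μH[1]) = 0 →
        c₁ = 0 ∧ c₂ = 0)) := by
  have hw : Continuous fun x => Real.sqrt (a x) := ha.sqrt
  have hwpos : ∀ x, 0 < Real.sqrt (a x) := fun x => Real.sqrt_pos.2 (hapos x)
  obtain ⟨p₁, ⟨hp₁, hp₁τ⟩, hu₁⟩ :=
    existsUnique_quadratic_orthogonal hind L1 hL1 hw hwpos continuous_const
  obtain ⟨p₂, ⟨hp₂, hp₂τ⟩, hu₂⟩ :=
    existsUnique_quadratic_orthogonal hind L1 hL1 hw hwpos L2.continuous_of_finiteDimensional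
  have hL1e₁ : ∀ x ∈ segment ℝ v₂ v₃, L1 x = 0 := fun x hx =>
    ((convex_singleton 0).affine_preimage L1).segment_subset (by simp [hL1]) (by simp [hL1]) hx
  have he₁ : MeasurableSet (segment ℝ v₂ v₃) := (isCompact_segment v₂ v₃).isClosed.measurableSet
  refine ⟨⟨(p₁, p₂), ⟨hp₁, hp₂, hp₁τ, hp₂τ⟩, fun pq ⟨hq₁, hq₂, hq₁τ, hq₂τ⟩ =>
    Prod.ext (hu₁ _ ⟨hq₁, hq₁τ⟩) (hu₂ _ ⟨hq₂, hq₂τ⟩)⟩, fun pq _ => ⟨fun x hx => by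
      simp [hL1e₁ x hx], fun c₁ c₂ h₀ h₁ => ?_⟩⟩
  refine eq_zero_of_setIntegral_segment_moments (x := v₂) (y := v₃) (ℓ := L2) (by simp [hL2])
    L2.continuous_of_finiteDimensional hw (fun z _ => hwpos z) ?_ ?_
  · rw [← h₀]
    exact setIntegral_congr_fun he₁ fun x hx => by simp [hL1e₁ x hx]
  · rw [← h₁]
    exact setIntegral_congr_fun he₁ fun x hx => by simp [hL1e₁ x hx]
end
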